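/- For real r with |r - 1| < 1/3 and r ≠ 2/3, 4/3, we have Λ(πr + θ(r)/2) - Λ(πr - θ(r)/2) > 0, where Λ is the Lobachevsky function and θ(r) = arccos(cos(2πr) - 1/2). At r = 2/3 the expression equals 0. -/

import Mathlib

open Real

noncomputable def Lob (z : ℝ) : ℝ := -∫ x in (0 : ℝ)..z, Real.log |2 * Real.sin x|

noncomputable def theta (r : ℝ) : ℝ := Real.arccos (Real.cos (2 * π * r) - 1 / 2)

/-!
Let `V(r) = Λ(πr + θ/2) - Λ(πr - θ/2)` (`lobDiff`). The definition of `θ` says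
`cos θ = cos 2πr - 1/2`, i.e. `(2 sin(πr + θ/2)) (2 sin(πr - θ/2)) = -1`, so the two endpoint
values of `log |2 sin|` are opposite and the chain rule gives `V' = 2π log |2 sin(πr - θ/2)|`,
with no contribution from `θ'`. On `(2/3, 1)` we have `πr - θ/2 ∈ (π/6, 5π/6)`, so `V' > 0`;
and `V(2/3) = Λ(π/6 + π) - Λ(π/6) = 0` since `log |2 sin|` is `π`-periodic with integral `0`
over a period. Finally `Λ` is odd and `π`-periodic and `θ(2 - r) = θ(r)`, so `V(2 - r) = V(r)`,
which handles `(1, 4/3)`.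
-/

open MeasureTheory intervalIntegral Set

theorem intervalIntegrable_log_abs_two_mul_sin (a b : ℝ) :
    IntervalIntegrable (fun x => log |2 * sin x|) volume a b := by
  have h : AnalyticOnNhd ℝ (fun x => 2 * sin x) (uIcc a b) := fun _ _ => by fun_prop
  simpa only [Function.comp_def, log_abs] using h.meromorphicOn.intervalIntegrable_log

theorem integral_log_abs_two_mul_sin_zero_pi : ∫ x in 0..π, log |2 * sin x| = 0 := by
  have hsplit : EqOn (fun x => log |2 * sin x|) (fun x => log 2 + log (sin x)) (Ioo 0 π) :=
    fun x hx => by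
      have hsin := sin_pos_of_pos_of_lt_pi hx.1 hx.2
      show log |2 * sin x| = log 2 + log (sin x)
      rw [abs_of_pos (by positivity), log_mul two_ne_zero hsin.ne']
  rw [integral_congr_Ioo_of_le pi_pos.le hsplit,
    integral_add intervalIntegrable_const (by apply intervalIntegrable_log_sin),
    integral_log_sin_zero_pi]
  simp only [intervalIntegral.integral_const, sub_zero, smul_eq_mul]
  ring

theorem periodic_log_abs_two_mul_sin : Function.Periodic (fun x => log |2 * sin x|) π := by
  intro x
  simp only [sin_add_pi, mul_neg, abs_neg]

theorem Lob_add_pi (z : ℝ) : Lob (z + π) = Lob z := by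
  have h := integral_interval_sub_left (intervalIntegrable_log_abs_two_mul_sin 0 (z + π))
    (intervalIntegrable_log_abs_two_mul_sin 0 z)
  rw [periodic_log_abs_two_mul_sin.intervalIntegral_add_eq z 0, zero_add,
    integral_log_abs_two_mul_sin_zero_pi, sub_eq_zero] at h
  rw [Lob, Lob, h]

theorem Lob_neg (z : ℝ) : Lob (-z) = -Lob z := by
  have h := integral_comp_neg (a := z) (b := 0) fun x => log |2 * sin x|
  simp only [sin_neg, mul_neg, abs_neg, neg_zero] at h
  rw [Lob, Lob, ← h, integral_symm]

theorem Lob_two_pi_sub (z : ℝ) : Lob (2 * π - z) = -Lob z := by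
  rw [show 2 * π - z = -z + π + π by ring, Lob_add_pi, Lob_add_pi, Lob_neg]

theorem continuous_Lob : Continuous Lob :=
  (continuous_primitive intervalIntegrable_log_abs_two_mul_sin 0).neg

theorem hasDerivAt_Lob {z : ℝ} (hz : sin z ≠ 0) : HasDerivAt Lob (-log |2 * sin z|) z := by
  have hcont : ContinuousAt (fun x => log |2 * sin x|) z := by
    fun_prop (disch := simpa using hz)
  exact (integral_hasDerivAt_right (intervalIntegrable_log_abs_two_mul_sin 0 z)
    (by fun_prop : Measurable _).stronglyMeasurable.stronglyMeasurableAtFilter hcont).neg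

theorem cos_lt_cos_of_abs_lt {x y : ℝ} (hy : y ≤ π) (h : |x| < y) : cos y < cos x := by
  rw [← cos_abs x]
  exact cos_lt_cos_of_nonneg_of_le_pi (abs_nonneg x) hy h

theorem neg_one_half_lt_cos_two_pi_mul {r : ℝ} (h : |r - 1| < 1 / 3) :
    -1 / 2 < cos (2 * π * r) := by
  have hbound : |2 * π * r - 2 * π| < 2 * π / 3 := by
    rw [show 2 * π * r - 2 * π = 2 * π * (r - 1) by ring, abs_mul, abs_of_pos two_pi_pos]
    nlinarith [pi_pos]
  have hcos : cos (2 * π / 3) = -1 / 2 := by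
    rw [show 2 * π / 3 = π - π / 3 by ring, cos_pi_sub, cos_pi_div_three]
    norm_num
  rw [← cos_sub_two_pi, ← hcos]
  exact cos_lt_cos_of_abs_lt (by linarith [pi_pos]) hbound

theorem one_half_lt_sin {x : ℝ} (h1 : π / 6 < x) (h2 : x < 5 * π / 6) : 1 / 2 < sin x := by
  rw [← cos_sub_pi_div_two, ← cos_pi_div_three]
  exact cos_lt_cos_of_abs_lt (by linarith [pi_pos]) (abs_lt.2 ⟨by linarith, by linarith⟩)

section Theta

variable {r : ℝ}

theorem pi_div_three_le_theta (r : ℝ) : π / 3 ≤ theta r :=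
  calc π / 3 = arccos (1 / 2) := by
        rw [← cos_pi_div_three, arccos_cos (by positivity) (by linarith [pi_pos])]
    _ ≤ theta r := arccos_le_arccos (by linarith [cos_le_one (2 * π * r)])

theorem theta_two_sub (r : ℝ) : theta (2 - r) = theta r := by
  rw [theta, theta, show 2 * π * (2 - r) = -(2 * π * r) + 2 * π + 2 * π by ring,
    cos_add_two_pi, cos_add_two_pi, cos_neg]

theorem continuous_theta : Continuous theta := by
  unfold theta
  fun_prop

theorem differentiableAt_theta (hr : -1 / 2 < cos (2 * π * r)) : DifferentiableAt ℝ theta r :=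
  (differentiableAt_arccos.2 ⟨by linarith, by linarith [cos_le_one (2 * π * r)]⟩).comp r
    (by fun_prop)

theorem two_mul_sin_add_half_theta_mul (hr : -1 / 2 ≤ cos (2 * π * r)) :
    2 * sin (π * r + theta r / 2) * (2 * sin (π * r - theta r / 2)) = -1 := by
  have hcos : cos (theta r) = cos (2 * π * r) - 1 / 2 :=
    cos_arccos (by linarith) (by linarith [cos_le_one (2 * π * r)])
  have h := cos_sub_cos (theta r) (2 * π * r)
  rw [show (theta r + 2 * π * r) / 2 = π * r + theta r / 2 by ring,
    show (theta r - 2 * π * r) / 2 = -(π * r - theta r / 2) by ring, sin_neg, hcos] at h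
  linear_combination -2 * h

theorem log_abs_two_mul_sin_add_half_theta (hr : -1 / 2 ≤ cos (2 * π * r)) :
    log |2 * sin (π * r + theta r / 2)| = -log |2 * sin (π * r - theta r / 2)| := by
  have hprod := two_mul_sin_add_half_theta_mul hr
  have hne : 2 * sin (π * r + theta r / 2) * (2 * sin (π * r - theta r / 2)) ≠ 0 := by
    rw [hprod]; norm_num
  rw [eq_neg_iff_add_eq_zero, ← log_mul (abs_ne_zero.2 (left_ne_zero_of_mul hne))
    (abs_ne_zero.2 (right_ne_zero_of_mul hne)), ← abs_mul, hprod]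
  simp

end Theta

noncomputable def lobDiff (r : ℝ) : ℝ := Lob (π * r + theta r / 2) - Lob (π * r - theta r / 2)

theorem lobDiff_two_sub (r : ℝ) : lobDiff (2 - r) = lobDiff r := by
  rw [lobDiff, lobDiff, theta_two_sub,
    show π * (2 - r) + theta r / 2 = 2 * π - (π * r - theta r / 2) by ring,
    show π * (2 - r) - theta r / 2 = 2 * π - (π * r + theta r / 2) by ring,
    Lob_two_pi_sub, Lob_two_pi_sub]
  ring

theorem lobDiff_two_thirds : lobDiff (2 / 3) = 0 := by
  have hθ : theta (2 / 3) = π := by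
    rw [theta, arccos_eq_pi, show 2 * π * (2 / 3) = π / 3 + π by ring, cos_add_pi,
      cos_pi_div_three]
    norm_num
  rw [lobDiff, hθ, show π * (2 / 3) + π / 2 = π / 6 + π by ring,
    show π * (2 / 3) - π / 2 = π / 6 by ring, Lob_add_pi, sub_self]

theorem continuous_lobDiff : Continuous lobDiff := by
  have := continuous_theta
  unfold lobDiff
  exact (continuous_Lob.comp (by fun_prop)).sub (continuous_Lob.comp (by fun_prop))

theorem hasDerivAt_lobDiff {r : ℝ} (hr : -1 / 2 < cos (2 * π * r)) :
    HasDerivAt lobDiff (2 * π * log |2 * sin (π * r - theta r / 2)|) r := by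
  have hne := (two_mul_sin_add_half_theta_mul hr.le).trans_ne (by norm_num : (-1 : ℝ) ≠ 0)
  have hθ := (differentiableAt_theta hr).hasDerivAt
  have hid := (hasDerivAt_id' r).const_mul π
  have hplus := (hasDerivAt_Lob (right_ne_zero_of_mul (left_ne_zero_of_mul hne))).comp r
    (hid.add (hθ.div_const 2))
  have hminus := (hasDerivAt_Lob (right_ne_zero_of_mul (right_ne_zero_of_mul hne))).comp r
    (hid.sub (hθ.div_const 2))
  -- the `θ'` terms cancel because the two logarithms are opposite
  refine (hplus.sub hminus).congr_deriv ?_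
  rw [log_abs_two_mul_sin_add_half_theta hr.le]
  ring

theorem log_abs_two_mul_sin_sub_half_theta_pos {r : ℝ} (h1 : 2 / 3 < r) (h2 : r < 1) :
    0 < log |2 * sin (π * r - theta r / 2)| := by
  have hθ := pi_div_three_le_theta r
  have hθ' : theta r ≤ π := arccos_le_pi _
  have hsin := one_half_lt_sin (x := π * r - theta r / 2)
    (by nlinarith [pi_pos]) (by nlinarith [pi_pos])
  exact log_pos (by rw [abs_of_pos (by linarith)]; linarith)

theorem strictMonoOn_lobDiff : StrictMonoOn lobDiff (Icc (2 / 3) 1) := by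
  refine strictMonoOn_of_deriv_pos (convex_Icc _ _) continuous_lobDiff.continuousOn ?_
  intro r hr
  rw [interior_Icc] at hr
  rw [(hasDerivAt_lobDiff (neg_one_half_lt_cos_two_pi_mul
    (abs_lt.2 ⟨by linarith [hr.1], by linarith [hr.2]⟩))).deriv]
  exact mul_pos two_pi_pos (log_abs_two_mul_sin_sub_half_theta_pos hr.1 hr.2)

theorem lobDiff_pos {r : ℝ} (h1 : 2 / 3 < r) (h2 : r ≤ 1) : 0 < lobDiff r :=
  lobDiff_two_thirds ▸ strictMonoOn_lobDiff ⟨le_rfl, by norm_num⟩ ⟨h1.le, h2⟩ h1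

theorem stmt6 :
    (∀ r : ℝ, |r - 1| < 1 / 3 → r ≠ 2 / 3 → r ≠ 4 / 3 →
      Lob (π * r + theta r / 2) - Lob (π * r - theta r / 2) > 0) ∧
    Lob (π * (2 / 3) + theta (2 / 3) / 2) - Lob (π * (2 / 3) - theta (2 / 3) / 2) = 0 := by
  refine ⟨fun r hr _ _ => ?_, lobDiff_two_thirds⟩
  obtain ⟨hlo, hhi⟩ := abs_lt.1 hr
  change 0 < lobDiff r
  rcases le_or_gt r 1 with hr1 | hr1
  · exact lobDiff_pos (by linarith) hr1
  · rw [← lobDiff_two_sub]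
    exact lobDiff_pos (by linarith) (by linarith)
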